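/- Coercivity of the rescaled dissipation: Let 0 < M < 1 and let f : [0,∞) → (0,∞) be a C¹ function with ∫₀^∞ f(z) dz = M, finite moments ∫₀^∞ z f(z) dz < ∞ and ∫₀^∞ z² f(z) dz < ∞, f'²/f integrable on (0,∞), and f(z) → 0, z f(z) → 0 as z → ∞. Then ∫₀^∞ f(z) (f'(z)/f(z) + z + f(0))² dz ≥ (M + 1/M − 2) f(0)² − 2M. -/

import Mathlib

/-!
Expanding the square, the cross terms integrate by parts: `∫ f' = -f(0)` and `∫ z f' = -M`.
The moment terms `∫ z² f` and `2 f(0) ∫ z f` are nonnegative and are dropped, and the Fisher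
information `∫ f'²/f` is bounded below by `f(0)²/M` through the Cauchy–Schwarz inequality
`(∫ f')² ≤ (∫ f'²/f) (∫ f)`.
-/

open MeasureTheory Set Filter Topology

lemma two_mul_le_sq_div_add (a : ℝ) {b : ℝ} (hb : 0 < b) : 2 * a ≤ a ^ 2 / b + b := by
  have : 0 ≤ (a - b) ^ 2 / b := by positivity
  have h : (a - b) ^ 2 / b = a ^ 2 / b + b - 2 * a := by field_simp; ring
  linarith

section WeightedCauchySchwarz

variable {α : Type*} [MeasurableSpace α] {μ : Measure α} {g w : α → ℝ}

lemma integrable_of_integrable_sq_div (hg : AEStronglyMeasurable g μ) (hw : ∀ᵐ x ∂μ, 0 < w x)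
    (hgw : Integrable (fun x => g x ^ 2 / w x) μ) (hwi : Integrable w μ) : Integrable g μ := by
  refine ((hgw.add hwi).div_const 2).mono' hg ?_
  filter_upwards [hw] with x hx
  have := two_mul_le_sq_div_add |g x| hx
  rw [sq_abs] at this
  simp only [Pi.add_apply, Real.norm_eq_abs]
  linarith

/-- The quadratic `t ↦ ∫ (t g - w)² / w` is nonnegative, so its discriminant is nonpositive. -/
lemma sq_integral_le_integral_sq_div_mul_integral (hw : ∀ᵐ x ∂μ, 0 < w x) (hg : Integrable g μ)
    (hgw : Integrable (fun x => g x ^ 2 / w x) μ) (hwi : Integrable w μ) :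
    (∫ x, g x ∂μ) ^ 2 ≤ (∫ x, g x ^ 2 / w x ∂μ) * ∫ x, w x ∂μ := by
  have hquad : ∀ t : ℝ, 0 ≤ (∫ x, g x ^ 2 / w x ∂μ) * (t * t) + (-2 * ∫ x, g x ∂μ) * t
      + ∫ x, w x ∂μ := by
    intro t
    have hint : ∫ x, (t ^ 2 * (g x ^ 2 / w x) - 2 * t * g x + w x) ∂μ
        = (∫ x, g x ^ 2 / w x ∂μ) * (t * t) + (-2 * ∫ x, g x ∂μ) * t + ∫ x, w x ∂μ := by
      rw [integral_add (f := fun x => t ^ 2 * (g x ^ 2 / w x) - 2 * t * g x)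
          ((hgw.const_mul _).sub (hg.const_mul _)) hwi,
        integral_sub (hgw.const_mul _) (hg.const_mul _), integral_const_mul, integral_const_mul]
      ring
    rw [← hint]
    refine integral_nonneg_of_ae ?_
    filter_upwards [hw] with x hx
    have := two_mul_le_sq_div_add (t * g x) hx
    rw [show (t * g x) ^ 2 / w x = t ^ 2 * (g x ^ 2 / w x) by ring] at this
    simp only [Pi.zero_apply]
    linarith
  have := discrim_le_zero hquad
  rw [discrim] at this
  linarith

end WeightedCauchySchwarz

lemma integral_Ioi_mul_deriv_eq_neg_integral {f f' : ℝ → ℝ}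
    (hderiv : ∀ z ∈ Ici (0 : ℝ), HasDerivAt f (f' z) z)
    (hf : IntegrableOn f (Ioi 0)) (hzf' : IntegrableOn (fun z => z * f' z) (Ioi 0))
    (hlim : Tendsto (fun z => z * f z) atTop (𝓝 0)) :
    ∫ z in Ioi (0 : ℝ), z * f' z = -∫ z in Ioi (0 : ℝ), f z := by
  have h := integral_Ioi_of_hasDerivAt_of_tendsto' (f := fun z => z * f z)
    (f' := fun z => f z + z * f' z) (fun z hz => by
      simpa only [one_mul] using (hasDerivAt_id' z).fun_mul (hderiv z hz)) (hf.add hzf') hlim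
  rw [integral_add hf hzf'] at h
  simp only [zero_mul, sub_zero] at h
  linarith

lemma mul_div_add_sq_eq (a b z c : ℝ) (hb : b ≠ 0) :
    b * (a / b + z + c) ^ 2
      = a ^ 2 / b + 2 * (z * a) + 2 * c * a + c ^ 2 * b + (z ^ 2 * b + 2 * c * (z * b)) := by
  field_simp
  ring

theorem rescaled_dissipation_coercivity_general
    (M : ℝ) (hM0 : 0 < M)
    (f f' : ℝ → ℝ)
    (hpos : ∀ z : ℝ, 0 ≤ z → 0 < f z)
    (hderiv : ∀ z : ℝ, 0 ≤ z → HasDerivAt f (f' z) z)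
    (hint : IntegrableOn f (Ioi 0))
    (hmass : ∫ z in Ioi (0:ℝ), f z = M)
    (hint1 : IntegrableOn (fun z => z * f z) (Ioi 0))
    (hint2 : IntegrableOn (fun z => z ^ 2 * f z) (Ioi 0))
    (hfisher : IntegrableOn (fun z => (f' z) ^ 2 / f z) (Ioi 0))
    (hlim : Tendsto f atTop (nhds 0))
    (hlim1 : Tendsto (fun z => z * f z) atTop (nhds 0)) :
    (M + 1 / M - 2) * (f 0) ^ 2 - 2 * M
      ≤ ∫ z in Ioi (0:ℝ), f z * (f' z / f z + z + f 0) ^ 2 := by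
  have hfpos : ∀ᵐ z ∂volume.restrict (Ioi (0 : ℝ)), 0 < f z :=
    ae_restrict_of_forall_mem measurableSet_Ioi fun z hz => hpos z hz.le
  have hf'meas : AEStronglyMeasurable f' (volume.restrict (Ioi 0)) :=
    (measurable_deriv f).aestronglyMeasurable.congr
      (ae_restrict_of_forall_mem measurableSet_Ioi fun z hz => (hderiv z hz.le).deriv)
  have hf' : IntegrableOn f' (Ioi 0) := integrable_of_integrable_sq_div hf'meas hfpos hfisher hint
  have hzf' : IntegrableOn (fun z => z * f' z) (Ioi 0) := by
    refine integrable_of_integrable_sq_div (w := fun z => z ^ 2 * f z) (by fun_prop) ?_ ?_ hint2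
    · filter_upwards [hfpos, ae_restrict_mem measurableSet_Ioi] with z hfz (hz : 0 < z)
      exact mul_pos (pow_pos hz 2) hfz
    · refine hfisher.congr ?_
      filter_upwards [hfpos, ae_restrict_mem measurableSet_Ioi] with z hfz (hz : 0 < z)
      field_simp
  have hI1 : ∫ z in Ioi (0 : ℝ), f' z = -f 0 := by
    simpa using integral_Ioi_of_hasDerivAt_of_tendsto' hderiv hf' hlim
  have hI2 : ∫ z in Ioi (0 : ℝ), z * f' z = -M := by
    rw [integral_Ioi_mul_deriv_eq_neg_integral hderiv hint hzf' hlim1, hmass]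
  set A := ∫ z in Ioi (0 : ℝ), f' z ^ 2 / f z
  have htrace : f 0 ^ 2 ≤ A * M := by
    simpa [hI1, hmass] using sq_integral_le_integral_sq_div_mul_integral hfpos hf' hfisher hint
  have hmoments : 0 ≤ ∫ z in Ioi (0 : ℝ), (z ^ 2 * f z + 2 * f 0 * (z * f z)) :=
    setIntegral_nonneg measurableSet_Ioi fun z (hz : 0 < z) => by
      have := hpos z hz.le
      have := hpos 0 le_rfl
      positivity
  have hexpand : ∫ z in Ioi (0 : ℝ), f z * (f' z / f z + z + f 0) ^ 2
      = A + 2 * (-M) + 2 * f 0 * (-f 0) + f 0 ^ 2 * M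
        + ∫ z in Ioi (0 : ℝ), (z ^ 2 * f z + 2 * f 0 * (z * f z)) := by
    rw [setIntegral_congr_fun measurableSet_Ioi fun z hz =>
        mul_div_add_sq_eq (f' z) (f z) z (f 0) (hpos z hz.le).ne',
      integral_add, integral_add, integral_add, integral_add, integral_const_mul,
      integral_const_mul, integral_const_mul, hI1, hI2, hmass]
    all_goals (unfold IntegrableOn at *; fun_prop)
  have hA : f 0 ^ 2 / M ≤ A := (div_le_iff₀ hM0).2 htrace
  have hcoef : (M + 1 / M - 2) * f 0 ^ 2 = M * f 0 ^ 2 + f 0 ^ 2 / M - 2 * f 0 ^ 2 := by ring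
  rw [hexpand, hcoef]
  linarith

/-- Coercivity of the rescaled dissipation: if `0 < M < 1` and `f > 0` is C¹
with mass `M`, finite first and second moments, `f'²/f` integrable and
`f, z f → 0` at infinity, then
`∫ f (f'/f + z + f(0))² ≥ (M + 1/M − 2) f(0)² − 2M`. -/
theorem rescaled_dissipation_coercivity
    (M : ℝ) (hM0 : 0 < M) (hM1 : M < 1)
    (f f' : ℝ → ℝ)
    (hpos : ∀ z : ℝ, 0 ≤ z → 0 < f z)
    (hderiv : ∀ z : ℝ, 0 ≤ z → HasDerivAt f (f' z) z)
    (hcont : ContinuousOn f' (Ici 0))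
    (hint : IntegrableOn f (Ioi 0))
    (hmass : ∫ z in Ioi (0:ℝ), f z = M)
    (hint1 : IntegrableOn (fun z => z * f z) (Ioi 0))
    (hint2 : IntegrableOn (fun z => z ^ 2 * f z) (Ioi 0))
    (hfisher : IntegrableOn (fun z => (f' z) ^ 2 / f z) (Ioi 0))
    (hlim : Tendsto f atTop (nhds 0))
    (hlim1 : Tendsto (fun z => z * f z) atTop (nhds 0)) :
    (M + 1 / M - 2) * (f 0) ^ 2 - 2 * M
      ≤ ∫ z in Ioi (0:ℝ), f z * (f' z / f z + z + f 0) ^ 2 :=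
  rescaled_dissipation_coercivity_general M hM0 f f' hpos hderiv hint hmass hint1 hint2 hfisher hlim
    hlim1
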